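/- arXiv:math/0411213 — 3 statements merged into one kernel-verified Lean document; each statement's English description precedes it below -/
import Mathlib

section
/- Let G be a finite group and H ≤ G a subgroup. Let Ψ be a conjugacy class of G and Ψ' a conjugacy class of H. Then m_Ψ · (R(H) ⊗ ℂ) ⊆ m_{Ψ'} (where the ideal of R(G) ⊗ ℂ is pushed into R(H) ⊗ ℂ via restriction of representations) if and only if Ψ' ⊆ Ψ ∩ H. -/
set_option synthInstance.maxHeartbeats 400000

/-- The algebra of class functions on `G`, modelling the complexified
representation ring `R(G) ⊗ ℂ` via the character isomorphism. -/
noncomputable def classFunAlg (G : Type*) [Group G] : Subalgebra ℂ (G → ℂ) where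
  carrier := {f | ∀ g k : G, f (k * g * k⁻¹) = f g}
  mul_mem' := fun {a b} ha hb g k => by simp only [Pi.mul_apply, ha g k, hb g k]
  one_mem' := fun g k => rfl
  add_mem' := fun {a b} ha hb g k => by simp only [Pi.add_apply, ha g k, hb g k]
  zero_mem' := fun g k => rfl
  algebraMap_mem' := fun c g k => rfl

/-- The ideal `m_Ψ` of class functions vanishing on a set `Ψ ⊆ G`. -/
noncomputable def vanishingIdeal {G : Type*} [Group G] (Ψ : Set G) :
    Ideal (classFunAlg G) where
  carrier := {f | ∀ g ∈ Ψ, (f : G → ℂ) g = 0}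
  add_mem' := fun {a b} ha hb g hg => by
    simp only [Subalgebra.coe_add, Pi.add_apply, ha g hg, hb g hg, add_zero]
  zero_mem' := fun g hg => rfl
  smul_mem' := fun c x hx g hg => by
    simp only [smul_eq_mul, Subalgebra.coe_mul, Pi.mul_apply, hx g hg, mul_zero]

/-- Restriction of class functions along a subgroup `H ≤ G`, modelling the
restriction homomorphism `r : R(G) ⊗ ℂ → R(H) ⊗ ℂ`. -/
noncomputable def resMap (G : Type*) [Group G] (H : Subgroup G)
    (f : classFunAlg G) : classFunAlg H :=
  ⟨fun t => (f : G → ℂ) (t : G), by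
    intro a k
    have h2 : ∀ g k : G, (f : G → ℂ) (k * g * k⁻¹) = (f : G → ℂ) g := f.2
    simpa using h2 (a : G) (k : G)⟩

/-- For `H ≤ G` finite and conjugacy classes `Ψ` of `G`, `Ψ'` of `H`, the ideal
`m_Ψ · (R(H) ⊗ ℂ)` is contained in `m_{Ψ'}` iff `Ψ' ⊆ Ψ ∩ H`. -/
theorem stmt8 (G : Type) [Group G] [Fintype G] (H : Subgroup G)
    (Ψ : ConjClasses G) (Ψ' : ConjClasses H) :
    Ideal.span (resMap G H '' (vanishingIdeal Ψ.carrier : Set (classFunAlg G)))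
        ≤ vanishingIdeal Ψ'.carrier
      ↔ ∀ t : H, t ∈ Ψ'.carrier → (t : G) ∈ Ψ.carrier := by
  constructor
  · intro h t ht
    classical
    by_contra hc
    have hf : (fun g : G => if ConjClasses.mk g = ConjClasses.mk (t : G) then (1:ℂ) else 0) ∈ classFunAlg G := by
      intro g k
      have : ConjClasses.mk (k * g * k⁻¹) = ConjClasses.mk g := by
        rw [ConjClasses.mk_eq_mk_iff_isConj]
        exact (isConj_iff.mpr ⟨k, rfl⟩).symm
      simp [this]
    set f : classFunAlg G := ⟨_, hf⟩ with hfdef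
    have hmem : f ∈ vanishingIdeal Ψ.carrier := by
      intro g hg
      show (if ConjClasses.mk g = ConjClasses.mk (t : G) then (1:ℂ) else 0) = 0
      rw [if_neg]
      intro heq
      apply hc
      rw [ConjClasses.mem_carrier_iff_mk_eq] at hg ⊢
      rw [← heq, hg]
    have h2 : resMap G H f ∈ vanishingIdeal Ψ'.carrier :=
      h (Ideal.subset_span ⟨f, hmem, rfl⟩)
    have h3 : (f : G → ℂ) (t : G) = 0 := h2 t ht
    rw [hfdef] at h3
    simp at h3
  · intro h
    rw [Ideal.span_le]
    rintro _ ⟨f, hf, rfl⟩ t ht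
    exact hf (t : G) (h t ht)
end

section
/- Let Q be a group, G ≤ Q a subgroup, and X a G-set, where G acts on G × X by k • (g,x) = (k g k⁻¹, k • x). Let Ψ_Q be a conjugacy class of Q with Ψ_Q ∩ G = Ψ a single G-conjugacy class, and let S = {(g,x) | g ∈ Ψ, g • x = x}. Then the map Q × S → Ψ_Q × (Q ×_G X) induced by (q, g, x) ↦ (q g q⁻¹, [(q, x)]) descends to a bijection from Q ×_G S onto S_Q = {(k, [(q,x)]) ∈ Ψ_Q × (Q ×_G X) | q⁻¹ k q ∈ G and (q⁻¹ k q) • x = x}. -/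
/-- The map `(q, (g, x)) ↦ (q g q⁻¹, [(q, x)])` descends to a bijection from
`Q ×_G S` onto `S_Q`, where `S = {(g,x) ∈ Ψ × X | g • x = x}` and
`S_Q = {(k, [(q,x)]) ∈ Ψ_Q × (Q ×_G X) | q⁻¹ k q ∈ G, (q⁻¹ k q) • x = x}`,
stated at the level of representatives: the map lands in `S_Q`
(well-definedness), it is injective on `G`-orbits, and it is surjective onto
`S_Q` up to the `G`-orbit equivalence. -/
theorem stmt14 {Q : Type*} [Group Q] (G : Subgroup Q) {X : Type*} [MulAction G X]
    (h : G) (ΨQ : Set Q) (hΨQ : ΨQ = {k : Q | IsConj (h : Q) k})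
    (hmeet : ∀ g : G, (g : Q) ∈ ΨQ ↔ IsConj h g) :
    (∀ (q : Q) (g : G) (x : X), IsConj h g → g • x = x → q * (g : Q) * q⁻¹ ∈ ΨQ)
    ∧ (∀ (q₁ q₂ : Q) (g₁ g₂ : G) (x₁ x₂ : X),
        IsConj h g₁ → g₁ • x₁ = x₁ → IsConj h g₂ → g₂ • x₂ = x₂ →
        (q₁ * (g₁ : Q) * q₁⁻¹ = q₂ * (g₂ : Q) * q₂⁻¹
          ∧ ∃ g₀ : G, q₂ = q₁ * (g₀ : Q)⁻¹ ∧ x₂ = g₀ • x₁) →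
        ∃ g₀ : G, q₂ = q₁ * (g₀ : Q)⁻¹ ∧ g₂ = g₀ * g₁ * g₀⁻¹ ∧ x₂ = g₀ • x₁)
    ∧ (∀ (k q : Q) (x : X), k ∈ ΨQ →
        (∃ g : G, (g : Q) = q⁻¹ * k * q ∧ g • x = x) →
        ∃ (q₀ : Q) (g₀ : G) (x₀ : X), IsConj h g₀ ∧ g₀ • x₀ = x₀ ∧
          q₀ * (g₀ : Q) * q₀⁻¹ = k ∧ ∃ g₁ : G, q = q₀ * (g₁ : Q)⁻¹ ∧ x = g₁ • x₀) := by
  subst hΨQ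
  refine ⟨?_, ?_, ?_⟩
  · intro q g x hc _
    obtain ⟨c, hc⟩ := isConj_iff.mp hc
    have hc' : (c : Q) * h * (c : Q)⁻¹ = g := by exact_mod_cast congrArg Subtype.val hc
    refine isConj_iff.mpr ⟨q * c, ?_⟩
    rw [← hc']; group
  · rintro q₁ q₂ g₁ g₂ x₁ x₂ _ _ _ _ ⟨heq, g₀, hq, hx⟩
    refine ⟨g₀, hq, ?_, hx⟩
    subst hq
    have : (g₂ : Q) = (g₀ : Q) * g₁ * (g₀ : Q)⁻¹ := by
      have h2 : (g₂ : Q) = (q₁ * (g₀ : Q)⁻¹)⁻¹ * (q₁ * g₁ * q₁⁻¹) * (q₁ * (g₀ : Q)⁻¹) := by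
        rw [heq]; group
      rw [h2]; group
    exact Subtype.ext (by push_cast; exact this)
  · rintro k q x hk ⟨g, hg, hgx⟩
    have hgΨ : (g : Q) ∈ {k : Q | IsConj (h : Q) k} := by
      rw [hg]
      exact hk.trans (isConj_iff.mpr ⟨q⁻¹, by group⟩)
    refine ⟨q, g, x, (hmeet g).mp hgΨ, hgx, by rw [hg]; group, 1, by simp, by simp⟩
end

section
/- Let G be a finite group, T ≤ G a subgroup, and h ∈ G. Suppose the G-conjugacy class Ψ of h meets T in the elements h₁, …, h_n (a union of finitely many T-conjugacy classes). Then the localization of R(T) ⊗ ℂ at the ideal generated by the image of m_Ψ ⊂ R(G) ⊗ ℂ is a semilocal ring whose maximal ideals are exactly the (extensions of the) ideals m_{h_i}: concretely, identifying R(T) ⊗ ℂ with functions on T constant on T-conjugacy classes, an R(T) ⊗ ℂ-module M satisfies M_{m_Ψ} = 0 if and only if M_{m_{h_i}} = 0 for all i. -/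
set_option synthInstance.maxHeartbeats 400000
set_option maxHeartbeats 1000000

/-- The multiplicative set in `R(T) ⊗ ℂ` which is the image under restriction
of the complement of `m_Ψ ⊂ R(G) ⊗ ℂ`, where `Ψ` is the conjugacy class of
`h`: restrictions to `T` of class functions on `G` not vanishing at `h`. -/
noncomputable def resCompl {G : Type*} [Group G] (T : Subgroup G) (h : G) :
    Submonoid (classFunAlg (T : Subgroup G)) where
  carrier := {b | ∃ f : G → ℂ, (∀ g k : G, f (k * g * k⁻¹) = f g) ∧ f h ≠ 0 ∧
    (b : T → ℂ) = fun t : T => f (t : G)}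
  mul_mem' := by
    rintro a b ⟨f, hf, hfh, hfe⟩ ⟨f', hf', hfh', hfe'⟩
    refine ⟨f * f', fun g k => by simp only [Pi.mul_apply, hf g k, hf' g k],
      mul_ne_zero hfh hfh', ?_⟩
    have hab : ((a * b : classFunAlg (T : Subgroup G)) : T → ℂ)
        = (a : T → ℂ) * (b : T → ℂ) := rfl
    rw [hab, hfe, hfe']
    rfl
  one_mem' := ⟨1, fun g k => rfl, one_ne_zero, rfl⟩

/-- The complement of the maximal ideal `m_t` of `R(T) ⊗ ℂ`: class functions
on `T` not vanishing at `t`. -/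
noncomputable def mCompl {G : Type*} [Group G] (T : Subgroup G) (t : T) :
    Submonoid (classFunAlg (T : Subgroup G)) where
  carrier := {b | (b : T → ℂ) t ≠ 0}
  mul_mem' := by
    intro a b ha hb
    have hab : ((a * b : classFunAlg (T : Subgroup G)) : T → ℂ) t
        = (a : T → ℂ) t * (b : T → ℂ) t := rfl
    simpa [hab] using mul_ne_zero ha hb
  one_mem' := one_ne_zero

/-- `R(T) ⊗ ℂ` localized at (the extension of) `m_Ψ` is semilocal with maximal
ideals the `m_{h_i}`, where `h₁, …, h_n` are the elements of `Ψ ∩ T`: an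
`R(T) ⊗ ℂ`-module `M` has vanishing localization at `m_Ψ` (every element is
killed by some member of the corresponding multiplicative set) iff its
localization at `m_{h_i}` vanishes for every `i`. -/
theorem stmt18 {G : Type} [Group G] [Fintype G] (T : Subgroup G) (h : G)
    (M : Type*) [AddCommGroup M] [Module (classFunAlg (T : Subgroup G)) M] :
    (∀ m : M, ∃ s ∈ resCompl T h, s • m = 0)
      ↔ ∀ t : T, IsConj h (t : G) → ∀ m : M, ∃ s ∈ mCompl T t, s • m = 0 := by
  classical
  haveI : Fintype T := Fintype.ofFinite _
  constructor
  · rintro H t ht m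
    obtain ⟨s, ⟨f, hf, hfh, hfe⟩, hsm⟩ := H m
    refine ⟨s, ?_, hsm⟩
    show (s : T → ℂ) t ≠ 0
    rw [hfe]
    obtain ⟨c, hc⟩ := isConj_iff.1 ht
    simpa [← hc, hf] using hfh
  · intro H m
    -- helper: conjugacy in T implies conjugacy in G
    have coeConj : ∀ a b : T, IsConj a b → IsConj (a : G) (b : G) := by
      intro a b hab
      obtain ⟨c, hc⟩ := isConj_iff.1 hab
      exact isConj_iff.2 ⟨(c : G), by rw [← hc]; push_cast; ring⟩
    -- idempotent-like class indicators
    let e : T → classFunAlg (T : Subgroup G) := fun t =>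
      ⟨fun x => if IsConj t x then 1 else 0, by
        intro g k
        have hiff : IsConj t (k * g * k⁻¹) ↔ IsConj t g :=
          ⟨fun h' => h'.trans (isConj_iff.2 ⟨k, rfl⟩).symm,
           fun h' => h'.trans (isConj_iff.2 ⟨k, rfl⟩)⟩
        simp only [hiff]⟩
    let const : ℂ → classFunAlg (T : Subgroup G) := fun c => ⟨fun _ => c, fun _ _ => rfl⟩
    have he_smul : ∀ t : T, IsConj h (t : G) → e t • m = 0 := by
      intro t ht
      obtain ⟨a, ha, ham⟩ := H t ht m
      have hc : (a : T → ℂ) t ≠ 0 := ha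
      have key : e t = const ((a : T → ℂ) t)⁻¹ * (e t * a) := by
        apply Subtype.ext
        funext x
        show (if IsConj t x then (1 : ℂ) else 0)
            = ((a : T → ℂ) t)⁻¹ * ((if IsConj t x then (1 : ℂ) else 0) * (a : T → ℂ) x)
        by_cases hx : IsConj t x
        · obtain ⟨c, hcc⟩ := isConj_iff.1 hx
          have hax : (a : T → ℂ) x = (a : T → ℂ) t := by
            rw [← hcc]; exact a.2 t c
          rw [hax, if_pos hx, one_mul, inv_mul_cancel₀ hc]
        · rw [if_neg hx, zero_mul, mul_zero]
      rw [key, mul_smul, mul_smul, ham, smul_zero, smul_zero]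
    -- the set of elements of T conjugate (in G) to h
    let S : Finset T := Finset.univ.filter (fun t => IsConj h (t : G))
    let n : T → ℂ := fun t => ((Finset.univ.filter (fun y : T => IsConj t y)).card : ℂ)
    have hn : ∀ t : T, n t ≠ 0 := by
      intro t
      have : t ∈ Finset.univ.filter (fun y : T => IsConj t y) :=
        Finset.mem_filter.2 ⟨Finset.mem_univ t, IsConj.refl t⟩
      simp only [n, Ne, Nat.cast_eq_zero]
      exact Finset.card_ne_zero_of_mem this
    -- the candidate element: indicator of S
    let s : classFunAlg (T : Subgroup G) :=
      ⟨fun x => if IsConj h (x : G) then 1 else 0, by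
        intro g k
        have hiff : IsConj h ((k * g * k⁻¹ : T) : G) ↔ IsConj h (g : G) := by
          have hco : IsConj (g : G) (((k * g * k⁻¹ : T) : G)) :=
            coeConj g (k * g * k⁻¹) (isConj_iff.2 ⟨k, rfl⟩)
          exact ⟨fun h' => h'.trans hco.symm, fun h' => h'.trans hco⟩
        simp only [hiff]⟩
    have hsum : s = ∑ t ∈ S, const (n t)⁻¹ * e t := by
      apply Subtype.ext
      funext x
      have hcoe : ((∑ t ∈ S, const (n t)⁻¹ * e t : classFunAlg (T : Subgroup G)) : T → ℂ) x
          = ∑ t ∈ S, (n t)⁻¹ * (if IsConj t x then 1 else 0) := by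
        rw [AddSubmonoidClass.coe_finset_sum, Finset.sum_apply]
        rfl
      show (if IsConj h (x : G) then (1 : ℂ) else 0) = _
      rw [hcoe]
      by_cases hx : IsConj h (x : G)
      · rw [if_pos hx]
        have h1 : ∀ t ∈ S, (n t)⁻¹ * (if IsConj t x then (1 : ℂ) else 0)
            = if IsConj t x then (n x)⁻¹ else 0 := by
          intro t _
          by_cases htx : IsConj t x
          · rw [if_pos htx, if_pos htx, mul_one]
            congr 1
            have hfe : (Finset.univ.filter (fun y : T => IsConj t y))
                = Finset.univ.filter (fun y : T => IsConj x y) := by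
              apply Finset.filter_congr
              intro y _
              exact ⟨fun hy => htx.symm.trans hy, fun hy => htx.trans hy⟩
            simp only [n, hfe]
          · rw [if_neg htx, if_neg htx, mul_zero]
        rw [Finset.sum_congr rfl h1, ← Finset.sum_filter]
        have hSf : S.filter (fun t => IsConj t x)
            = Finset.univ.filter (fun y : T => IsConj x y) := by
          ext y
          simp only [S, Finset.mem_filter, Finset.mem_univ, true_and]
          constructor
          · rintro ⟨_, hyx⟩; exact hyx.symm
          · intro hxy
            exact ⟨hx.trans (coeConj x y hxy), hxy.symm⟩
        rw [hSf, Finset.sum_const, nsmul_eq_mul]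
        exact (mul_inv_cancel₀ (hn x)).symm
      · rw [if_neg hx]
        symm
        apply Finset.sum_eq_zero
        intro t htS
        have ht : IsConj h (t : G) := (Finset.mem_filter.1 htS).2
        have htx : ¬ IsConj t x := fun hc => hx (ht.trans (coeConj t x hc))
        rw [if_neg htx, mul_zero]
    refine ⟨s, ⟨fun g => if IsConj h g then 1 else 0, ?_, ?_, rfl⟩, ?_⟩
    · intro g k
      have hiff : IsConj h (k * g * k⁻¹) ↔ IsConj h g :=
        ⟨fun h' => h'.trans (isConj_iff.2 ⟨k, rfl⟩).symm,
         fun h' => h'.trans (isConj_iff.2 ⟨k, rfl⟩)⟩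
      simp only [hiff]
    · show (if IsConj h h then (1 : ℂ) else 0) ≠ 0
      rw [if_pos (IsConj.refl h)]; exact one_ne_zero
    · rw [hsum, Finset.sum_smul]
      apply Finset.sum_eq_zero
      intro t htS
      have ht : IsConj h (t : G) := (Finset.mem_filter.1 htS).2
      rw [mul_smul, he_smul t ht, smul_zero]
end
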